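/- arXiv:1509.07050 — 7 statements merged into one kernel-verified Lean document; each statement's English description precedes it below -/
import Mathlib

section
/- Let (b_j)_{j≥1} be a sequence of strictly positive real numbers such that for every constant C > 0 the series ∑_{j≥1} exp(-C/b_j²) diverges. Then for every t > 0, γ({y ∈ ℝ^ℕ : b_j·|y_j| ≤ t for all j}) = 0; consequently, for γ-almost every y one has sup_{j≥1} b_j·|y_j| = ∞. -/
open MeasureTheory ProbabilityTheory Real

/-- `γ` is the countable product `⨂_{j ∈ ℕ} N(0,1)` of standard Gaussian measures on `ℝ^ℕ`,
characterized as the (unique) probability measure on `ℕ → ℝ` whose finite-dimensional cylinder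
probabilities are products of standard Gaussian probabilities. -/
def IsGaussianProductMeasure (γ : Measure (ℕ → ℝ)) : Prop :=
  IsProbabilityMeasure γ ∧
    ∀ (s : Finset ℕ) (B : ℕ → Set ℝ), (∀ j ∈ s, MeasurableSet (B j)) →
      γ {y | ∀ j ∈ s, y j ∈ B j} = ∏ j ∈ s, gaussianReal 0 1 (B j)

/-!
A standard Gaussian puts mass at least `c e^{-a²}` on `(a, a + 1]`, so `N(0,1){|x| ≤ a} ≤
1 - c e^{-a²} ≤ exp (-c e^{-a²})`. Hence the cylinder `{∀ j < n, |y j| ≤ t / b j}` has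
`γ`-measure at most `exp (-c ∑_{j<n} e^{-t²/b_j²})`, which tends to `0` by divergence of the
series with `C = t²`. A countable union over `t = 1, 2, …` gives the almost sure statement.
-/

open Filter Finset

lemma measure_forall_mem_eq_zero_of_not_summable {γ : Measure (ℕ → ℝ)} {ν : Measure ℝ}
    {B : ℕ → Set ℝ} (hcyl : ∀ s : Finset ℕ, γ {y | ∀ j ∈ s, y j ∈ B j} = ∏ j ∈ s, ν (B j))
    {p : ℕ → ℝ} (hp0 : ∀ j, 0 ≤ p j) (hνB : ∀ j, ν (B j) ≤ ENNReal.ofReal (1 - p j))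
    (hp : ¬ Summable p) :
    γ {y | ∀ j, y j ∈ B j} = 0 := by
  have hbound (n : ℕ) :
      γ {y | ∀ j, y j ∈ B j} ≤ ENNReal.ofReal (exp (-∑ j ∈ range n, p j)) :=
    calc γ {y | ∀ j, y j ∈ B j}
        ≤ γ {y | ∀ j ∈ range n, y j ∈ B j} := measure_mono fun y hy j _ => hy j
      _ = ∏ j ∈ range n, ν (B j) := hcyl _
      _ ≤ ∏ j ∈ range n, ENNReal.ofReal (exp (-p j)) :=
          prod_le_prod' fun j _ => (hνB j).trans <|
            ENNReal.ofReal_le_ofReal (by linarith [add_one_le_exp (-p j)])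
      _ = ENNReal.ofReal (exp (-∑ j ∈ range n, p j)) := by
          rw [← ENNReal.ofReal_prod_of_nonneg fun j _ => (exp_pos _).le, ← exp_sum,
            sum_neg_distrib]
  have hsum : Tendsto (fun n => ∑ j ∈ range n, p j) atTop atTop :=
    (not_summable_iff_tendsto_nat_atTop_of_nonneg hp0).1 hp
  have hlim : Tendsto (fun n => ENNReal.ofReal (exp (-∑ j ∈ range n, p j))) atTop (nhds 0) := by
    simpa using ENNReal.tendsto_ofReal
      (tendsto_exp_atBot.comp (tendsto_neg_atTop_atBot.comp hsum))
  exact nonpos_iff_eq_zero.1 (ge_of_tendsto' hlim hbound)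

lemma exp_neg_one_div_mul_exp_neg_sq_le_gaussianPDFReal {a x : ℝ} (hx : |x| ≤ a + 1) :
    exp (-1) / √(2 * π) * exp (-a ^ 2) ≤ gaussianPDFReal 0 1 x := by
  have hsq : x ^ 2 ≤ (a + 1) ^ 2 := sq_le_sq' (abs_le.1 hx).1 (abs_le.1 hx).2
  rw [gaussianPDFReal, div_mul_eq_mul_div, ← exp_add, div_eq_inv_mul]
  simp only [NNReal.coe_one, mul_one, sub_zero]
  gcongr
  -- `(a + 1)² / 2 ≤ a² + 1`
  nlinarith [sq_nonneg (a - 1)]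

lemma ofReal_le_gaussianReal_Ioc {a : ℝ} (ha : 0 ≤ a) :
    ENNReal.ofReal (exp (-1) / √(2 * π) * exp (-a ^ 2)) ≤
      gaussianReal 0 1 (Set.Ioc a (a + 1)) := by
  rw [gaussianReal_apply 0 one_ne_zero]
  calc ENNReal.ofReal (exp (-1) / √(2 * π) * exp (-a ^ 2))
      = ∫⁻ _ in Set.Ioc a (a + 1), ENNReal.ofReal (exp (-1) / √(2 * π) * exp (-a ^ 2)) := by
        simp
    _ ≤ ∫⁻ x in Set.Ioc a (a + 1), gaussianPDF 0 1 x :=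
        setLIntegral_mono (measurable_gaussianPDF 0 1) fun x hx =>
          ENNReal.ofReal_le_ofReal <| exp_neg_one_div_mul_exp_neg_sq_le_gaussianPDFReal <|
            abs_le.2 ⟨by linarith [hx.1], hx.2⟩

lemma exists_gaussianReal_abs_le_le :
    ∃ c > 0, ∀ a ≥ 0,
      gaussianReal 0 1 {x | |x| ≤ a} ≤ ENNReal.ofReal (1 - c * exp (-a ^ 2)) := by
  refine ⟨exp (-1) / √(2 * π), by positivity, fun a ha => ?_⟩
  have hsub : {x : ℝ | |x| ≤ a} ⊆ (Set.Ioc a (a + 1))ᶜ := fun x hx hmem =>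
    (le_abs_self x).trans hx |>.not_gt hmem.1
  calc gaussianReal 0 1 {x | |x| ≤ a}
      ≤ gaussianReal 0 1 (Set.Ioc a (a + 1))ᶜ := measure_mono hsub
    _ = 1 - gaussianReal 0 1 (Set.Ioc a (a + 1)) := prob_compl_eq_one_sub measurableSet_Ioc
    _ ≤ 1 - ENNReal.ofReal (exp (-1) / √(2 * π) * exp (-a ^ 2)) :=
        tsub_le_tsub_left (ofReal_le_gaussianReal_Ioc ha) 1
    _ = ENNReal.ofReal (1 - exp (-1) / √(2 * π) * exp (-a ^ 2)) := by
        rw [ENNReal.ofReal_sub _ (by positivity), ENNReal.ofReal_one]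

lemma ae_exists_lt_of_measure_forall_le_eq_zero {α : Type*} [MeasurableSpace α]
    {μ : Measure α} {f : ℕ → α → ℝ} (h : ∀ t : ℝ, 0 < t → μ {y | ∀ j, f j y ≤ t} = 0) :
    ∀ᵐ y ∂μ, ∀ T : ℝ, ∃ j, T < f j y := by
  rw [ae_iff]
  refine measure_mono_null (t := ⋃ n : ℕ, {y | ∀ j, f j y ≤ n + 1}) ?_
    (measure_iUnion_null fun n => h _ (by positivity))
  intro y hy
  push Not at hy
  obtain ⟨T, hT⟩ := hy
  exact Set.mem_iUnion.2 ⟨⌈T⌉₊, fun j => (hT j).trans <| (Nat.le_ceil T).trans (by linarith)⟩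

/-- If `b j > 0` and `∑ j, exp (-C / (b j)²)` diverges for every `C > 0`, then
for every `t > 0` the set `{y | ∀ j, b j * |y j| ≤ t}` is `γ`-null; consequently, for
`γ`-a.e. `y` one has `sup_j b j * |y j| = ∞`, i.e. for every `T` there is `j` with
`b j * |y j| > T`. -/
theorem stmt_4 (γ : Measure (ℕ → ℝ)) (hγ : IsGaussianProductMeasure γ)
    (b : ℕ → ℝ) (hb : ∀ j, 0 < b j)
    (hdiv : ∀ C : ℝ, 0 < C → ¬ Summable fun j => Real.exp (-C / (b j) ^ 2)) :
    (∀ t : ℝ, 0 < t → γ {y | ∀ j, b j * |y j| ≤ t} = 0) ∧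
      ∀ᵐ y ∂γ, ∀ T : ℝ, ∃ j, T < b j * |y j| := by
  obtain ⟨c, hc, hball⟩ := exists_gaussianReal_abs_le_le
  have hnull (t : ℝ) (ht : 0 < t) : γ {y | ∀ j, b j * |y j| ≤ t} = 0 := by
    have hset :
        {y : ℕ → ℝ | ∀ j, b j * |y j| ≤ t} = {y | ∀ j, y j ∈ {x | |x| ≤ t / b j}} := by
      ext y
      simp only [Set.mem_ofPred_eq, le_div_iff₀ (hb _), mul_comm]
    have hp : ¬ Summable fun j => c * exp (-(t / b j) ^ 2) := by
      simpa only [summable_mul_left_iff hc.ne', div_pow, neg_div] using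
        hdiv (t ^ 2) (by positivity)
    rw [hset]
    exact measure_forall_mem_eq_zero_of_not_summable
      (fun s => hγ.2 s _ fun j _ => measurableSet_le (by fun_prop) measurable_const)
      (fun j => by positivity) (fun j => hball _ (div_pos ht (hb j)).le) hp
  exact ⟨hnull, ae_exists_lt_of_measure_forall_le_eq_zero hnull⟩
end

section
/- Let (c_j)_{j≥1} be a sequence of nonnegative real numbers with ∑_{j≥1} c_j < ∞, and let k ≥ 0. Then the function y ↦ exp(k·∑'_{j≥1} c_j·|y_j|) is integrable with respect to γ, i.e. ∫_{ℝ^ℕ} exp(k·∑'_{j≥1} c_j|y_j|) dγ(y) < ∞. -/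
/-! Only the one-dimensional marginals matter. With `K = ∑ c + 1` the weights `c j / K` have total
mass less than `1`, so Jensen's inequality for `exp`, with the missing mass put at `0`, gives
`exp (k ∑ c j |y j|) ≤ 1 + ∑ (c j / K) exp (k K |y j|)`. Integrating term by term bounds the
integral by `1 + ∫ exp (k K |x|) dN(0,1)`, which is finite because a Gaussian has exponential
moments of every order. -/

open MeasureTheory ProbabilityTheory Real

open Filter

lemma IsGaussianProductMeasure.map_eval {γ : Measure (ℕ → ℝ)}
    (hγ : IsGaussianProductMeasure γ) (j : ℕ) : γ.map (fun y ↦ y j) = gaussianReal 0 1 := by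
  ext s hs
  rw [Measure.map_apply (measurable_pi_apply j) hs]
  simpa [Set.preimage] using hγ.2 {j} (fun _ ↦ s) (fun _ _ ↦ hs)

lemma lintegral_exp_mul_abs_gaussianReal_lt_top (μ : ℝ) (v : NNReal) (t : ℝ) :
    ∫⁻ x, ENNReal.ofReal (exp (t * |x|)) ∂gaussianReal μ v < ⊤ :=
  (integrable_exp_mul_abs (X := id) (integrable_exp_mul_gaussianReal t)
    (integrable_exp_mul_gaussianReal (-t))).lintegral_lt_top

lemma Real.exp_sum_mul_le_one_add {ι : Type*} (s : Finset ι) {w : ι → ℝ} (a : ι → ℝ)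
    (hw : ∀ i ∈ s, 0 ≤ w i) (hw₁ : ∑ i ∈ s, w i ≤ 1) :
    exp (∑ i ∈ s, w i * a i) ≤ 1 + ∑ i ∈ s, w i * exp (a i) := by
  have h := convexOn_exp.map_add_sum_le (q := 0) (v := 1 - ∑ i ∈ s, w i) (p := a) hw
    (by ring) (fun _ _ ↦ Set.mem_univ _) (by linarith) (Set.mem_univ _)
  have hw₀ : 0 ≤ ∑ i ∈ s, w i := Finset.sum_nonneg hw
  simp only [smul_eq_mul, mul_zero, zero_add, exp_zero, mul_one] at h
  linarith

lemma ENNReal.ofReal_exp_tsum_mul_le_one_add {ι : Type*} {w : ι → ℝ} (a : ι → ℝ)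
    (hw : ∀ i, 0 ≤ w i) (hw_sum : Summable w) (hw₁ : ∑' i, w i ≤ 1) :
    ENNReal.ofReal (exp (∑' i, w i * a i)) ≤ 1 + ∑' i, ENNReal.ofReal (w i * exp (a i)) := by
  by_cases hwa : Summable fun i ↦ w i * a i
  · have hcont := (ENNReal.continuous_ofReal.comp Real.continuous_exp).tendsto (∑' i, w i * a i)
    refine le_of_tendsto (hcont.comp hwa.hasSum) (Eventually.of_forall fun s ↦ ?_)
    calc ENNReal.ofReal (exp (∑ i ∈ s, w i * a i))
        ≤ ENNReal.ofReal (1 + ∑ i ∈ s, w i * exp (a i)) := ENNReal.ofReal_le_ofReal <|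
          exp_sum_mul_le_one_add s a (fun i _ ↦ hw i)
            ((hw_sum.sum_le_tsum s fun i _ ↦ hw i).trans hw₁)
      _ = 1 + ∑ i ∈ s, ENNReal.ofReal (w i * exp (a i)) := by
          have hterm (i : ι) : 0 ≤ w i * exp (a i) := mul_nonneg (hw i) (exp_pos _).le
          rw [ENNReal.ofReal_add zero_le_one (Finset.sum_nonneg fun i _ ↦ hterm i),
            ENNReal.ofReal_one, ENNReal.ofReal_sum_of_nonneg fun i _ ↦ hterm i]
      _ ≤ 1 + ∑' i, ENNReal.ofReal (w i * exp (a i)) := by gcongr; exact ENNReal.sum_le_tsum s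
  · simp [tsum_eq_zero_of_not_summable hwa]

theorem lintegral_exp_tsum_mul_abs_lt_top {ι : Type*} [Countable ι] (μ : Measure (ι → ℝ))
    [IsFiniteMeasure μ] (ν : Measure ℝ) (hμν : ∀ j, μ.map (fun y ↦ y j) = ν)
    (hν : ∀ t, ∫⁻ x, ENNReal.ofReal (exp (t * |x|)) ∂ν < ⊤)
    {c : ι → ℝ} (hc : ∀ j, 0 ≤ c j) (hsum : Summable c) (k : ℝ) :
    ∫⁻ y, ENNReal.ofReal (exp (k * ∑' j, c j * |y j|)) ∂μ < ⊤ := by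
  set K := ∑' j, c j + 1
  have hK : 0 < K := by have : 0 ≤ ∑' j, c j := tsum_nonneg hc; positivity
  set w : ι → ℝ := fun j ↦ c j / K
  have hw : ∀ j, 0 ≤ w j := fun j ↦ div_nonneg (hc j) hK.le
  have hw₁ : ∑' j, w j ≤ 1 := by
    rw [tsum_div_const, div_le_one hK]; linarith
  have hpoint (y : ι → ℝ) : k * ∑' j, c j * |y j| = ∑' j, w j * (k * K * |y j|) := by
    rw [← tsum_mul_left]
    congr 1 with j
    simp only [w]
    field_simp
  have hmarginal (j : ι) : ∫⁻ y, ENNReal.ofReal (exp (k * K * |y j|)) ∂μ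
      = ∫⁻ x, ENNReal.ofReal (exp (k * K * |x|)) ∂ν := by
    rw [← hμν j, lintegral_map (by fun_prop) (measurable_pi_apply j)]
  calc ∫⁻ y, ENNReal.ofReal (exp (k * ∑' j, c j * |y j|)) ∂μ
      ≤ ∫⁻ y, 1 + ∑' j, ENNReal.ofReal (w j * exp (k * K * |y j|)) ∂μ := by
        refine lintegral_mono fun y ↦ ?_
        rw [hpoint]
        exact ENNReal.ofReal_exp_tsum_mul_le_one_add _ hw (hsum.div_const K) hw₁
    _ = μ Set.univ +
          (∑' j, ENNReal.ofReal (w j)) * ∫⁻ x, ENNReal.ofReal (exp (k * K * |x|)) ∂ν := by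
        rw [lintegral_add_left measurable_const, lintegral_const, one_mul,
          lintegral_tsum fun j ↦ (by fun_prop : Measurable _).aemeasurable,
          ← ENNReal.tsum_mul_right]
        congr 1
        refine tsum_congr fun j ↦ ?_
        simp_rw [ENNReal.ofReal_mul (hw j)]
        rw [lintegral_const_mul _ (by fun_prop), hmarginal]
    _ < ⊤ := by
        rw [← ENNReal.ofReal_tsum_of_nonneg hw (hsum.div_const K)]
        exact ENNReal.add_lt_top.2
          ⟨measure_lt_top μ _, ENNReal.mul_lt_top ENNReal.ofReal_lt_top (hν _)⟩

theorem stmt_6_general (γ : Measure (ℕ → ℝ)) (hγ : IsGaussianProductMeasure γ)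
    (c : ℕ → ℝ) (hc : ∀ j, 0 ≤ c j) (hsum : Summable c) (k : ℝ) :
    ∫⁻ y, ENNReal.ofReal (Real.exp (k * ∑' j : ℕ, c j * |y j|)) ∂γ < ⊤ :=
  haveI := hγ.1
  lintegral_exp_tsum_mul_abs_lt_top γ _ hγ.map_eval
    (lintegral_exp_mul_abs_gaussianReal_lt_top 0 1) hc hsum k

/-- If `c j ≥ 0` with `∑ j, c j < ∞` and `k ≥ 0`, then
`∫ exp (k * ∑' j, c j * |y j|) dγ(y) < ∞` (the sum `∑'` being `0` by convention on the
`γ`-null set of `y` where the series does not converge). -/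
theorem stmt_6 (γ : Measure (ℕ → ℝ)) (hγ : IsGaussianProductMeasure γ)
    (c : ℕ → ℝ) (hc : ∀ j, 0 ≤ c j) (hsum : Summable c) (k : ℝ) (hk : 0 ≤ k) :
    ∫⁻ y, ENNReal.ofReal (Real.exp (k * ∑' j : ℕ, c j * |y j|)) ∂γ < ⊤ :=
  stmt_6_general γ hγ c hc hsum k
end

section
/- Let (σ_k)_{k≥0} be a sequence of nonnegative real numbers, let t ≥ 0 and let 0 < δ ≤ 1 satisfy exp(t/δ) ≤ 2. Assume that σ_k ≤ ∑_{ℓ=0}^{k-1} (t^{k-ℓ}/(k-ℓ)!) · σ_ℓ for every k ≥ 1. Then σ_k ≤ σ_0 · δ^k for all k ≥ 0. -/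
/-- If `(σ k)` are nonnegative reals, `t ≥ 0`, `0 < δ ≤ 1` with
`exp (t/δ) ≤ 2`, and `σ k ≤ ∑_{ℓ<k} t^(k-ℓ)/(k-ℓ)! · σ ℓ` for all `k ≥ 1`, then
`σ k ≤ σ 0 · δ^k` for all `k`. -/
theorem stmt_11 (σ : ℕ → ℝ) (hσ : ∀ k, 0 ≤ σ k) (t : ℝ) (ht : 0 ≤ t)
    (δ : ℝ) (hδ0 : 0 < δ) (hδ1 : δ ≤ 1) (hexp : Real.exp (t / δ) ≤ 2)
    (hrec : ∀ k : ℕ, 1 ≤ k →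
      σ k ≤ ∑ l ∈ Finset.range k, t ^ (k - l) / ((k - l).factorial : ℝ) * σ l) :
    ∀ k : ℕ, σ k ≤ σ 0 * δ ^ k := by
  set x := t / δ with hx
  have hx0 : 0 ≤ x := div_nonneg ht hδ0.le
  intro k
  induction k using Nat.strong_induction_on with
  | _ k ih =>
    rcases Nat.eq_zero_or_pos k with rfl | hk
    · simp
    calc σ k ≤ ∑ l ∈ Finset.range k, t ^ (k - l) / ((k - l).factorial : ℝ) * σ l :=
          hrec k hk
      _ ≤ ∑ l ∈ Finset.range k, t ^ (k - l) / ((k - l).factorial : ℝ) * (σ 0 * δ ^ l) := by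
          apply Finset.sum_le_sum
          intro l hl
          have hlk := Finset.mem_range.mp hl
          exact mul_le_mul_of_nonneg_left (ih l hlk)
            (div_nonneg (pow_nonneg ht _) (Nat.cast_nonneg _))
      _ = σ 0 * δ ^ k * ∑ l ∈ Finset.range k, x ^ (k - l) / ((k - l).factorial : ℝ) := by
          rw [Finset.mul_sum]
          apply Finset.sum_congr rfl
          intro l hl
          have hlk := Finset.mem_range.mp hl
          have h1 : δ ^ k = δ ^ (k - l) * δ ^ l := by
            rw [← pow_add, Nat.sub_add_cancel hlk.le]
          rw [hx, div_pow, h1]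
          have hδne : (δ : ℝ) ^ (k - l) ≠ 0 := pow_ne_zero _ hδ0.ne'
          field_simp
      _ ≤ σ 0 * δ ^ k * 1 := by
          apply mul_le_mul_of_nonneg_left _ (mul_nonneg (hσ 0) (pow_nonneg hδ0.le _))
          have hre : ∑ l ∈ Finset.range k, x ^ (k - l) / ((k - l).factorial : ℝ)
              = ∑ l ∈ Finset.range k, x ^ (l + 1) / ((l + 1).factorial : ℝ) := by
            rw [← Finset.sum_range_reflect]
            apply Finset.sum_congr rfl
            intro l hl
            have hlk := Finset.mem_range.mp hl
            have : k - (k - 1 - l) = l + 1 := by omega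
            rw [this]
          rw [hre]
          have h2 : ∑ l ∈ Finset.range (k + 1), x ^ l / (l.factorial : ℝ)
              = (∑ l ∈ Finset.range k, x ^ (l + 1) / ((l + 1).factorial : ℝ)) + 1 := by
            rw [Finset.sum_range_succ']
            simp
          have h3 := Real.sum_le_exp_of_nonneg hx0 (k + 1)
          rw [h2] at h3
          linarith
      _ = σ 0 * δ ^ k := mul_one _
end

section
/- Let r ≥ 1 be an integer, let μ ∈ F satisfy μ_j ≤ r for all j, and let (z_j)_{j∈ℕ} be nonnegative real numbers with ∑_j z_j ≤ K for some K ≥ 0. Then ∑_{ν ≤ μ, ν ≠ μ} √(μ!/ν!) · z^{μ-ν}/(μ-ν)! ≤ exp(√r · K) - 1, where the (finite) sum runs over all multi-indices ν ∈ F with ν ≤ μ componentwise and ν ≠ μ. -/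
open Real

private lemma sum_Iic_prod_aux (μ : ℕ →₀ ℕ) (g : ℕ → ℕ → ℝ) :
    ∑ ν ∈ Finset.Iic μ, ∏ j ∈ μ.support, g j (ν j)
      = ∏ j ∈ μ.support, ∑ k ∈ Finset.Iic (μ j), g j k := by
  classical
  have hIic : Finset.Iic μ =
      (μ.support.pi fun j => Finset.Iic (μ j)).map
        ⟨Finsupp.indicator μ.support, Finsupp.indicator_injective _⟩ := by
    ext ν
    simp only [Finset.mem_Iic, Finset.mem_map, Finset.mem_pi, Function.Embedding.coeFn_mk]
    constructor
    · intro hν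
      refine ⟨fun j _ => ν j, fun j hj => hν j, ?_⟩
      ext j
      rw [Finsupp.indicator_apply]
      split_ifs with h
      · rfl
      · have h1 : μ j = 0 := Finsupp.notMem_support_iff.1 h
        have h2 := hν j
        omega
    · rintro ⟨p, hp, rfl⟩
      intro j
      rw [Finsupp.indicator_apply]
      split_ifs with h
      · exact hp j h
      · simp
  rw [hIic, Finset.sum_map, Finset.prod_sum]
  simp only [Function.Embedding.coeFn_mk]
  refine Finset.sum_congr rfl fun p hp => ?_
  rw [← Finset.prod_attach μ.support fun j => g j ((Finsupp.indicator μ.support p) j)]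
  exact Finset.prod_congr rfl fun x _ => by rw [Finsupp.indicator_of_mem x.2]

/-- For an integer `r ≥ 1`, a finitely supported multi-index `μ` with
`μ j ≤ r` for all `j`, and nonnegative reals `(z j)` with `∑ j, z j ≤ K`, one has
`∑_{ν ≤ μ, ν ≠ μ} √(μ!/ν!) · z^(μ-ν)/(μ-ν)! ≤ exp (√r · K) - 1`, the sum running over
the (finite) set of multi-indices `ν < μ` (i.e. `ν ≤ μ` componentwise and `ν ≠ μ`). -/
theorem stmt_12 (r : ℕ) (hr : 1 ≤ r) (μ : ℕ →₀ ℕ) (hμ : ∀ j, μ j ≤ r)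
    (z : ℕ → ℝ) (hz : ∀ j, 0 ≤ z j) (hzsum : Summable z)
    (K : ℝ) (hK0 : 0 ≤ K) (hK : (∑' j : ℕ, z j) ≤ K) :
    ∑ ν ∈ Finset.Iio μ,
        Real.sqrt ((μ.prod fun _ n => (n.factorial : ℝ)) / (ν.prod fun _ n => (n.factorial : ℝ))) *
          ((μ - ν).prod fun j n => z j ^ n) / ((μ - ν).prod fun _ n => (n.factorial : ℝ)) ≤
      Real.exp (Real.sqrt r * K) - 1 := by
  classical
  set s := μ.support with hs
  set w : ℕ → ℝ := fun j => Real.sqrt r * z j with hw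
  have hw0 : ∀ j, 0 ≤ w j := fun j => mul_nonneg (Real.sqrt_nonneg _) (hz j)
  set g : ℕ → ℕ → ℝ := fun j k => w j ^ k / k.factorial with hg
  have hsupp : ∀ {ν : ℕ →₀ ℕ}, ν ≤ μ → ν.support ⊆ s := by
    intro ν hν j hj
    have h1 : ν j ≠ 0 := Finsupp.mem_support_iff.1 hj
    have h2 := hν j
    exact Finsupp.mem_support_iff.2 (by omega)
  have hsubsupp : ∀ {ν : ℕ →₀ ℕ}, ν ≤ μ → (μ - ν).support ⊆ s := by
    intro ν hν j hj
    have h1 : (μ - ν) j ≠ 0 := Finsupp.mem_support_iff.1 hj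
    rw [Finsupp.tsub_apply] at h1
    exact Finsupp.mem_support_iff.2 (by omega)
  -- Step 1: termwise bound
  have hterm : ∀ ν ∈ Finset.Iio μ,
      Real.sqrt ((μ.prod fun _ n => (n.factorial : ℝ)) / (ν.prod fun _ n => (n.factorial : ℝ))) *
          ((μ - ν).prod fun j n => z j ^ n) / ((μ - ν).prod fun _ n => (n.factorial : ℝ)) ≤
        ∏ j ∈ s, g j ((μ - ν) j) := by
    intro ν hν
    have hνμ : ν ≤ μ := le_of_lt (Finset.mem_Iio.1 hν)
    have hνj : ∀ j, ν j ≤ μ j := fun j => hνμ j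
    have hfac1 : (μ.prod fun _ n => (n.factorial : ℝ)) = ∏ j ∈ s, ((μ j).factorial : ℝ) := rfl
    have hfac2 : (ν.prod fun _ n => (n.factorial : ℝ)) = ∏ j ∈ s, ((ν j).factorial : ℝ) :=
      Finsupp.prod_of_support_subset ν (hsupp hνμ) _ (fun i _ => by simp)
    have hfac3 : ((μ - ν).prod fun _ n => (n.factorial : ℝ))
        = ∏ j ∈ s, (((μ - ν) j).factorial : ℝ) :=
      Finsupp.prod_of_support_subset _ (hsubsupp hνμ) _ (fun i _ => by simp)
    have hfac4 : ((μ - ν).prod fun j n => z j ^ n) = ∏ j ∈ s, z j ^ ((μ - ν) j) :=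
      Finsupp.prod_of_support_subset _ (hsubsupp hνμ) _ (fun i _ => by simp)
    have hsqrt : Real.sqrt ((μ.prod fun _ n => (n.factorial : ℝ)) /
        (ν.prod fun _ n => (n.factorial : ℝ))) ≤ ∏ j ∈ s, Real.sqrt r ^ ((μ - ν) j) := by
      have hB0 : (0:ℝ) ≤ ∏ j ∈ s, Real.sqrt r ^ ((μ - ν) j) :=
        Finset.prod_nonneg fun j _ => pow_nonneg (Real.sqrt_nonneg _) _
      have hA : (μ.prod fun _ n => (n.factorial : ℝ)) / (ν.prod fun _ n => (n.factorial : ℝ))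
          ≤ (∏ j ∈ s, Real.sqrt r ^ ((μ - ν) j)) ^ 2 := by
        rw [hfac1, hfac2, ← Finset.prod_div_distrib, ← Finset.prod_pow]
        refine Finset.prod_le_prod (fun j _ => by positivity) (fun j _ => ?_)
        rw [← pow_mul, mul_comm ((μ - ν) j) 2, pow_mul, Real.sq_sqrt (by positivity : (0:ℝ) ≤ (r:ℝ))]
        rw [div_le_iff₀ (by positivity)]
        have hd : (ν j).factorial * (μ j).descFactorial (μ j - ν j) = (μ j).factorial := by
          have h := Nat.factorial_mul_descFactorial (Nat.sub_le (μ j) (ν j))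
          rwa [Nat.sub_sub_self (hνj j)] at h
        have hnat : (μ j).factorial ≤ (ν j).factorial * r ^ (μ j - ν j) := by
          rw [← hd]
          exact Nat.mul_le_mul_left _ ((Nat.descFactorial_le_pow _ _).trans
            (Nat.pow_le_pow_left (hμ j) _))
        rw [Finsupp.tsub_apply]
        calc ((μ j).factorial : ℝ) ≤ ((ν j).factorial : ℝ) * (r : ℝ) ^ (μ j - ν j) := by
              exact_mod_cast hnat
          _ = (r : ℝ) ^ (μ j - ν j) * ((ν j).factorial : ℝ) := mul_comm _ _
      calc Real.sqrt ((μ.prod fun _ n => (n.factorial : ℝ)) /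
            (ν.prod fun _ n => (n.factorial : ℝ)))
          ≤ Real.sqrt ((∏ j ∈ s, Real.sqrt r ^ ((μ - ν) j)) ^ 2) := Real.sqrt_le_sqrt hA
        _ = ∏ j ∈ s, Real.sqrt r ^ ((μ - ν) j) := Real.sqrt_sq hB0
    have hzpow : (0:ℝ) ≤ (μ - ν).prod fun j n => z j ^ n := by
      rw [hfac4]; exact Finset.prod_nonneg fun j _ => pow_nonneg (hz j) _
    have hfacpos : (0:ℝ) < (μ - ν).prod fun _ n => (n.factorial : ℝ) := by
      rw [hfac3]; exact Finset.prod_pos fun j _ => by positivity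
    calc Real.sqrt ((μ.prod fun _ n => (n.factorial : ℝ)) /
            (ν.prod fun _ n => (n.factorial : ℝ))) *
          ((μ - ν).prod fun j n => z j ^ n) / ((μ - ν).prod fun _ n => (n.factorial : ℝ))
        ≤ (∏ j ∈ s, Real.sqrt r ^ ((μ - ν) j)) *
          ((μ - ν).prod fun j n => z j ^ n) / ((μ - ν).prod fun _ n => (n.factorial : ℝ)) := by
          gcongr
      _ = ∏ j ∈ s, g j ((μ - ν) j) := by
          rw [hfac3, hfac4, ← Finset.prod_mul_distrib, ← Finset.prod_div_distrib]
          exact Finset.prod_congr rfl fun j _ => by rw [← mul_pow]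
  -- Step 2: bound the sum of the g-products
  have hsum : ∑ ν ∈ Finset.Iio μ, ∏ j ∈ s, g j ((μ - ν) j)
      ≤ Real.exp (Real.sqrt r * K) - 1 := by
    have hIic : ∑ ν ∈ Finset.Iic μ, ∏ j ∈ s, g j ((μ - ν) j)
        = 1 + ∑ ν ∈ Finset.Iio μ, ∏ j ∈ s, g j ((μ - ν) j) := by
      rw [← Finset.Iic_erase, ← Finset.add_sum_erase _ _ (Finset.mem_Iic.2 (le_refl μ))]
      congr 1
      rw [show μ - μ = 0 by simp]
      simp [hg]
    have hreindex : ∑ ν ∈ Finset.Iic μ, ∏ j ∈ s, g j ((μ - ν) j)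
        = ∑ ν ∈ Finset.Iic μ, ∏ j ∈ s, g j (ν j) := by
      refine Finset.sum_nbij' (i := fun ν => μ - ν) (j := fun ν => μ - ν) ?_ ?_ ?_ ?_ ?_
      · intro ν hν
        exact Finset.mem_Iic.2 tsub_le_self
      · intro ν hν
        exact Finset.mem_Iic.2 tsub_le_self
      · intro ν hν
        exact tsub_tsub_cancel_of_le (Finset.mem_Iic.1 hν)
      · intro ν hν
        exact tsub_tsub_cancel_of_le (Finset.mem_Iic.1 hν)
      · intro ν hν
        rfl
    have hfactor : ∑ ν ∈ Finset.Iic μ, ∏ j ∈ s, g j (ν j)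
        ≤ Real.exp (Real.sqrt r * K) := by
      rw [sum_Iic_prod_aux μ g]
      have hfac_le : ∀ j ∈ s, ∑ k ∈ Finset.Iic (μ j), g j k ≤ Real.exp (w j) := by
        intro j _
        have hIr : Finset.Iic (μ j) = Finset.range (μ j + 1) := by
          ext k; simp [Nat.lt_succ_iff]
        rw [hIr]
        exact Real.sum_le_exp_of_nonneg (hw0 j) _
      calc ∏ j ∈ s, ∑ k ∈ Finset.Iic (μ j), g j k
          ≤ ∏ j ∈ s, Real.exp (w j) := by
            refine Finset.prod_le_prod (fun j _ => ?_) hfac_le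
            exact Finset.sum_nonneg fun k _ => div_nonneg (pow_nonneg (hw0 j) _) (Nat.cast_nonneg _)
        _ = Real.exp (∑ j ∈ s, w j) := (Real.exp_sum _ _).symm
        _ ≤ Real.exp (Real.sqrt r * K) := by
            apply Real.exp_le_exp.2
            have h1 : ∑ j ∈ s, w j = Real.sqrt r * ∑ j ∈ s, z j := by
              rw [Finset.mul_sum]
            rw [h1]
            have h2 : ∑ j ∈ s, z j ≤ ∑' j, z j :=
              Summable.sum_le_tsum s (fun i _ => hz i) hzsum
            exact mul_le_mul_of_nonneg_left (h2.trans hK) (Real.sqrt_nonneg _)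
    have := hreindex ▸ hfactor
    rw [hIic] at this
    linarith
  exact (Finset.sum_le_sum hterm).trans hsum
end

section
/- Let f : ℕ → ℕ → [0,∞] satisfy f(j, 0) = 1 for every j. Then, in the extended nonnegative reals, ∑_{ν ∈ F} ∏_{j ∈ supp(ν)} f(j, ν_j) = ∏_{j ∈ ℕ} (∑_{n=0}^∞ f(j, n)), where the left-hand side is a sum over all finitely supported multi-indices ν and the right-hand side is the infinite product over j of the sums ∑_n f(j,n). -/
open scoped ENNReal

lemma pi_tsum_aux (α : Type) [Fintype α] (F : α → ℕ → ℝ≥0∞) :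
    ∑' g : α → ℕ, ∏ j, F j (g j) = ∏ j, ∑' n, F j n := by
  revert F
  refine Fintype.induction_empty_option
    (P := fun α _ => ∀ F : α → ℕ → ℝ≥0∞,
      ∑' g : α → ℕ, ∏ j, F j (g j) = ∏ j, ∑' n, F j n) ?_ ?_ ?_ α
  · intro α β _ e ih F
    letI : Fintype α := Fintype.ofEquiv β e.symm
    rw [← (e.arrowCongr (Equiv.refl ℕ)).tsum_eq]
    have h1 : ∀ h : α → ℕ,
        ∏ j, F j ((e.arrowCongr (Equiv.refl ℕ)) h j) = ∏ i, F (e i) (h i) := by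
      intro h
      refine (Equiv.prod_comp e _).symm.trans (Finset.prod_congr rfl fun i _ => ?_)
      simp [Equiv.arrowCongr]
    have h2 : ∏ j, (∑' n, F j n) = ∏ i, ∑' n, F (e i) n :=
      (Equiv.prod_comp e _).symm
    simp_rw [h1, h2]
    exact ih (fun i => F (e i))
  · intro F
    have h1 : ∀ g : PEmpty → ℕ, ∏ j, F j (g j) = 1 := by
      intro g; simp
    simp_rw [h1]
    haveI : Unique (PEmpty → ℕ) :=
      ⟨⟨fun x => x.elim⟩, fun g => funext fun x => x.elim⟩
    rw [tsum_eq_single (default : PEmpty → ℕ)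
      (fun b hb => absurd (Subsingleton.elim b default) hb)]
    simp
  · intro α _ ih F
    let E : ℕ × (α → ℕ) ≃ (Option α → ℕ) :=
      (Equiv.piOptionEquivProd (β := fun _ => ℕ)).symm
    rw [← E.tsum_eq]
    have h1 : ∀ p : ℕ × (α → ℕ),
        ∏ j, F j (E p j) = F none p.1 * ∏ i, F (some i) (p.2 i) := by
      intro p
      rw [Fintype.prod_option]
      have hn : E p none = p.1 := rfl
      have hs : ∀ i, E p (some i) = p.2 i := fun i => rfl
      rw [hn]
      exact congrArg _ (Finset.prod_congr rfl fun i _ => by rw [hs])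
    simp_rw [h1]
    rw [show (∑' c : ℕ × (α → ℕ), F none c.1 * ∏ i, F (some i) (c.2 i))
        = ∑' n, ∑' h : α → ℕ, F none n * ∏ i, F (some i) (h i) from ENNReal.tsum_prod (f := fun (n : ℕ) (h : α → ℕ) => F none n * ∏ i, F (some i) (h i)),
      Fintype.prod_option, ← ih (fun i => F (some i))]
    simp_rw [ENNReal.tsum_mul_left]
    rw [ENNReal.tsum_mul_right]

/-- If `f : ℕ → ℕ → ℝ≥0∞` satisfies `f j 0 = 1` for all `j`, then (in `ℝ≥0∞`)
`∑_{ν ∈ F} ∏_{j ∈ supp ν} f j (ν j) = ∏_j ∑_n f j n`, the sum running over all finitely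
supported multi-indices `ν` and the right-hand side being the infinite product over `j`. -/
theorem stmt_14 (f : ℕ → ℕ → ℝ≥0∞) (hf : ∀ j, f j 0 = 1) :
    ∑' ν : ℕ →₀ ℕ, ∏ j ∈ ν.support, f j (ν j) = ∏' j : ℕ, ∑' n : ℕ, f j n := by
  classical
  set g : (ℕ →₀ ℕ) → ℝ≥0∞ := fun ν => ∏ j ∈ ν.support, f j (ν j) with hg
  set a : ℕ → ℝ≥0∞ := fun j => ∑' n, f j n with ha
  set T : Finset ℕ → ℝ≥0∞ :=
    fun s => ∑' ν : {ν : ℕ →₀ ℕ // ↑ν.support ⊆ (↑s : Set ℕ)}, g ν.1 with hT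
  -- Step A : T s = ∏ j in s, a j
  have stepA : ∀ s : Finset ℕ, T s = ∏ j ∈ s, a j := by
    intro s
    have hgs : ∀ ν : {ν : ℕ →₀ ℕ // ↑ν.support ⊆ (↑s : Set ℕ)},
        g ν.1 = ∏ j ∈ s, f j (ν.1 j) := by
      intro ν
      refine Finset.prod_subset (Finset.coe_subset.mp ν.2) fun j _ hj => ?_
      rw [Finsupp.notMem_support_iff.mp hj, hf]
    let e := (Finsupp.restrictSupportEquiv (↑s : Set ℕ) ℕ).trans Finsupp.equivFunOnFinite
    have he : ∀ ν : {ν : ℕ →₀ ℕ // ↑ν.support ⊆ (↑s : Set ℕ)},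
        ∀ j : ((↑s : Set ℕ) : Type), e ν j = ν.1 j.1 := by
      intro ν j
      exact Finsupp.subtypeDomain_apply
    have key : ∀ ν : {ν : ℕ →₀ ℕ // ↑ν.support ⊆ (↑s : Set ℕ)},
        g ν.1 = ∏ j : ((↑s : Set ℕ) : Type), f j.1 (e ν j) := by
      intro ν
      rw [hgs ν, ← Finset.prod_finset_coe (fun j => f j (ν.1 j)) s]
      exact Finset.prod_congr rfl fun j _ => by rw [he]
    calc T s = ∑' ν : {ν : ℕ →₀ ℕ // ↑ν.support ⊆ (↑s : Set ℕ)},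
          ∏ j : ((↑s : Set ℕ) : Type), f j.1 (e ν j) := tsum_congr key
      _ = ∑' h : (((↑s : Set ℕ) : Type) → ℕ), ∏ j : ((↑s : Set ℕ) : Type), f j.1 (h j) :=
            e.tsum_eq (fun h => ∏ j : ((↑s : Set ℕ) : Type), f j.1 (h j))
      _ = ∏ j : ((↑s : Set ℕ) : Type), ∑' n, f j.1 n := pi_tsum_aux _ _
      _ = ∏ j ∈ s, a j := Finset.prod_finset_coe a s
  -- Step B : LHS = ⨆ s, T s
  have hTind : ∀ s : Finset ℕ,
      T s = ∑' ν : ℕ →₀ ℕ, Set.indicator {ν | ↑ν.support ⊆ (↑s : Set ℕ)} g ν := by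
    intro s
    exact tsum_subtype {ν : ℕ →₀ ℕ | ↑ν.support ⊆ (↑s : Set ℕ)} g
  have stepB : (∑' ν : ℕ →₀ ℕ, g ν) = ⨆ s : Finset ℕ, T s := by
    apply le_antisymm
    · rw [ENNReal.tsum_eq_iSup_sum]
      refine iSup_le fun t => ?_
      set s : Finset ℕ := t.sup Finsupp.support with hs
      refine le_trans ?_ (le_iSup _ s)
      rw [hTind s]
      refine le_trans (le_of_eq ?_) (ENNReal.sum_le_tsum t)
      refine (Finset.sum_congr rfl fun ν hν => ?_).symm
      exact Set.indicator_of_mem (by exact_mod_cast Finset.le_sup (f := Finsupp.support) hν) g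
    · refine iSup_le fun s => ?_
      rw [hTind s]
      exact ENNReal.tsum_le_tsum fun ν => Set.indicator_le_self _ _ ν
  -- Step C : RHS = ⨆ s, ∏ j in s, a j
  have ha1 : ∀ j, 1 ≤ a j := by
    intro j
    rw [ha, ← hf j]
    exact ENNReal.le_tsum 0
  have hmono : Monotone fun s : Finset ℕ => ∏ j ∈ s, a j := fun s t hst =>
    Finset.prod_le_prod_of_subset_of_one_le' hst fun j _ _ => ha1 j
  have stepC : HasProd a (⨆ s : Finset ℕ, ∏ j ∈ s, a j) :=
    tendsto_atTop_iSup hmono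
  rw [stepB, stepC.tprod_eq]
  exact iSup_congr stepA
end

section
/- Let 0 < p < 2, set q := 2p/(2-p), let (ρ_j)_{j∈ℕ} be strictly positive reals with ∑_j ρ_j^{-q} < ∞, and let r be a positive integer with 2/(r+1) < p. Define, for ν ∈ F, b_ν := ∏_{j ∈ supp(ν)} (∑_{l=0}^{r} C(ν_j, l) · ρ_j^{2l}), where C(n,l) is the binomial coefficient. Then ∑_{ν ∈ F} b_ν^{-q/2} < ∞. -/
open Finset Filter

private lemma sum_finsupp_prod_aux (s : Finset ℕ) (t : ℕ → Finset ℕ) (f : ℕ → ℕ → ℝ) :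
    ∑ ν ∈ s.finsupp t, ∏ j ∈ s, f j (ν j) = ∏ j ∈ s, ∑ n ∈ t j, f j n := by
  unfold Finset.finsupp
  rw [Finset.sum_map, Finset.prod_sum]
  refine Finset.sum_congr (by congr!) fun g hg => ?_
  simp only [Function.Embedding.coeFn_mk]
  rw [← Finset.prod_attach s fun j => f j (Finsupp.indicator s g j)]
  exact Finset.prod_congr rfl fun j _ => by rw [Finsupp.indicator_of_mem j.2]

private lemma summable_finsupp_prod_aux (f : ℕ → ℕ → ℝ) (h0 : ∀ j, f j 0 = 1)
    (hpos : ∀ j n, 0 ≤ f j n) (hb : ∀ j, Summable fun n => f j (n + 1))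
    (hc : Summable fun j => ∑' n, f j (n + 1)) :
    Summable fun ν : ℕ →₀ ℕ => ∏ j ∈ ν.support, f j (ν j) := by
  set c : ℕ → ℝ := fun j => ∑' n, f j (n + 1) with hc_def
  have hc0 : ∀ j, 0 ≤ c j := fun j => tsum_nonneg fun n => hpos j (n + 1)
  refine summable_of_sum_le (c := Real.exp (∑' j, c j))
    (Pi.le_def.2 fun ν => Finset.prod_nonneg fun j _ => hpos j _) fun S => ?_
  set s : Finset ℕ := S.sup Finsupp.support with hs_def
  set t : ℕ → Finset ℕ := fun j => Finset.range ((S.sup fun ν => ν j) + 1) with ht_def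
  have hmem : ∀ ν ∈ S, ν.support ⊆ s := fun ν hν => Finset.le_sup (f := Finsupp.support) hν
  have hsub : S ⊆ s.finsupp t := by
    intro ν hν
    rw [Finset.mem_finsupp_iff]
    exact ⟨hmem ν hν, fun j _ => Finset.mem_range.2
      (Nat.lt_succ_of_le (Finset.le_sup (f := fun ν : ℕ →₀ ℕ => ν j) hν))⟩
  calc ∑ ν ∈ S, ∏ j ∈ ν.support, f j (ν j)
      = ∑ ν ∈ S, ∏ j ∈ s, f j (ν j) := by
        refine Finset.sum_congr rfl fun ν hν => Finset.prod_subset (hmem ν hν) fun j _ hj => ?_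
        rw [Finsupp.notMem_support_iff.1 hj, h0 j]
    _ ≤ ∑ ν ∈ s.finsupp t, ∏ j ∈ s, f j (ν j) :=
        Finset.sum_le_sum_of_subset_of_nonneg hsub fun ν _ _ =>
          Finset.prod_nonneg fun j _ => hpos j _
    _ = ∏ j ∈ s, ∑ n ∈ t j, f j n := sum_finsupp_prod_aux s t f
    _ ≤ ∏ j ∈ s, Real.exp (c j) := by
        refine Finset.prod_le_prod (fun j _ => Finset.sum_nonneg fun n _ => hpos j n)
          fun j _ => ?_
        have h1 : ∑ n ∈ t j, f j n
            = (∑ n ∈ Finset.range (S.sup fun ν => ν j), f j (n + 1)) + f j 0 :=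
          Finset.sum_range_succ' _ _
        have h2 : ∑ n ∈ Finset.range (S.sup fun ν => ν j), f j (n + 1) ≤ c j :=
          Summable.sum_le_tsum _ (fun n _ => hpos j (n + 1)) (hb j)
        rw [h1, h0 j]
        have h3 := Real.add_one_le_exp (c j)
        linarith
    _ = Real.exp (∑ j ∈ s, c j) := (Real.exp_sum s c).symm
    _ ≤ Real.exp (∑' j, c j) := Real.exp_le_exp.2 (Summable.sum_le_tsum s (fun j _ => hc0 j) hc)

private lemma summable_pow_of_summable_aux {x : ℕ → ℝ} (hx0 : ∀ j, 0 ≤ x j) (hx : Summable x)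
    {m : ℕ} (hm : m ≠ 0) : Summable fun j => x j ^ m := by
  refine summable_of_isBigO_nat hx (Asymptotics.isBigO_iff.2 ⟨1, ?_⟩)
  filter_upwards [hx.tendsto_atTop_zero.eventually (gt_mem_nhds one_pos)] with j hj
  rw [one_mul, Real.norm_eq_abs, Real.norm_eq_abs, abs_of_nonneg (pow_nonneg (hx0 j) m),
    abs_of_nonneg (hx0 j)]
  exact pow_le_of_le_one (hx0 j) hj.le hm

/-- Let `0 < p < 2`, `q = 2p/(2-p)`, let `(ρ j)` be positive reals with
`∑ j, ρ j ^ (-q) < ∞` (real powers), and let `r ≥ 1` be an integer with `2/(r+1) < p`.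
With `b_ν = ∏_{j ∈ supp ν} ∑_{l=0}^r C(ν_j, l) ρ_j^(2l)`, the family `(b_ν ^ (-q/2))_{ν ∈ F}`
is summable. -/
theorem stmt_15 (p q : ℝ) (hp0 : 0 < p) (hp2 : p < 2) (hq : q = 2 * p / (2 - p))
    (ρ : ℕ → ℝ) (hρ : ∀ j, 0 < ρ j) (hρsum : Summable fun j => ρ j ^ (-q))
    (r : ℕ) (hr : 1 ≤ r) (hrp : 2 / ((r : ℝ) + 1) < p) :
    Summable fun ν : ℕ →₀ ℕ =>
      (∏ j ∈ ν.support, ∑ l ∈ Finset.range (r + 1), ((ν j).choose l : ℝ) * ρ j ^ (2 * l))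
        ^ (-q / 2) := by
  have h2p : (0:ℝ) < 2 - p := by linarith
  have hq0 : 0 < q := by rw [hq]; positivity
  simp only [neg_div]
  set s : ℝ := q / 2 with hs_def
  have hs0 : 0 < s := by positivity
  set e : ℝ := (r : ℝ) * s with he_def
  have he1 : 1 < e := by
    have h1 : 2 < p * ((r:ℝ) + 1) := (div_lt_iff₀ (by positivity)).1 hrp
    have h2 : (r:ℝ) * (2 * p / (2 - p) / 2) = ((r:ℝ) * p) / (2 - p) := by
      field_simp
    rw [he_def, hs_def, hq, h2, lt_div_iff₀ h2p]
    nlinarith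
  have he0 : 0 < e := lt_trans one_pos he1
  have hxj : ∀ j, (0:ℝ) < ρ j ^ (-q) := fun j => Real.rpow_pos_of_pos (hρ j) _
  set A : ℕ → ℕ → ℝ :=
    fun j n => ∑ l ∈ Finset.range (r+1), ((n.choose l : ℝ)) * ρ j ^ (2*l) with hA_def
  have hA1 : ∀ j n, 1 ≤ A j n := by
    intro j n
    have h00 : ((n.choose 0 : ℝ)) * ρ j ^ (2*0) = 1 := by simp
    calc (1:ℝ) = (n.choose 0 : ℝ) * ρ j ^ (2*0) := h00.symm
      _ ≤ A j n := Finset.single_le_sum (f := fun l => ((n.choose l:ℝ)) * ρ j ^ (2*l))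
            (fun l _ => mul_nonneg (Nat.cast_nonneg _) (pow_nonneg (hρ j).le _))
            (Finset.mem_range.2 (Nat.succ_pos r))
  have hApos : ∀ j n, 0 < A j n := fun j n => lt_of_lt_of_le one_pos (hA1 j n)
  set f : ℕ → ℕ → ℝ := fun j n => A j n ^ (-s) with hf_def
  have hfpos : ∀ j n, 0 ≤ f j n := fun j n => (Real.rpow_pos_of_pos (hApos j n) _).le
  have hf0 : ∀ j, f j 0 = 1 := by
    intro j
    have hA0 : A j 0 = 1 := by
      simp only [hA_def]
      rw [Finset.sum_eq_single 0]
      · simp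
      · intro l hl hl0
        rw [Nat.choose_eq_zero_of_lt (Nat.pos_of_ne_zero hl0)]; simp
      · intro h; exact absurd (Finset.mem_range.2 (Nat.succ_pos r)) h
    simp only [hf_def]
    rw [hA0, Real.one_rpow]
  have key : ∀ j n m, m ≤ n → m ≤ r → f j n ≤ (n.choose m : ℝ) ^ (-s) * (ρ j ^ (-q)) ^ m := by
    intro j n m hmn hmr
    have hch : (0:ℝ) < (n.choose m : ℝ) := by exact_mod_cast Nat.choose_pos hmn
    have hB : (0:ℝ) < (n.choose m : ℝ) * ρ j ^ (2*m) := mul_pos hch (pow_pos (hρ j) _)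
    have hBA : (n.choose m : ℝ) * ρ j ^ (2*m) ≤ A j n :=
      Finset.single_le_sum (f := fun l => ((n.choose l:ℝ)) * ρ j ^ (2*l))
        (fun l _ => mul_nonneg (Nat.cast_nonneg _) (pow_nonneg (hρ j).le _))
        (Finset.mem_range.2 (Nat.lt_succ_of_le hmr))
    have h1 : f j n ≤ ((n.choose m : ℝ) * ρ j ^ (2*m)) ^ (-s) :=
      Real.rpow_le_rpow_of_nonpos hB hBA (neg_nonpos.2 hs0.le)
    have h2 : ((n.choose m : ℝ) * ρ j ^ (2*m)) ^ (-s)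
        = (n.choose m : ℝ) ^ (-s) * (ρ j ^ (-q)) ^ m := by
      rw [Real.mul_rpow hch.le (pow_nonneg (hρ j).le _)]
      congr 1
      rw [← Real.rpow_natCast (ρ j) (2*m), ← Real.rpow_mul (hρ j).le,
        show ((2*m : ℕ) : ℝ) * (-s) = (-q) * ((m:ℕ) : ℝ) from by push_cast; rw [hs_def]; ring,
        Real.rpow_mul (hρ j).le, Real.rpow_natCast]
    calc f j n ≤ _ := h1
      _ = _ := h2
  have case1 : ∀ j n, n ≤ r → f j n ≤ (ρ j ^ (-q)) ^ n := by
    intro j n h2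
    have h := key j n n le_rfl h2
    rwa [Nat.choose_self, Nat.cast_one, Real.one_rpow, one_mul] at h
  set K : ℝ := (r.factorial : ℝ) ^ s * ((r:ℝ)+1) ^ e with hK_def
  have hK0 : 0 ≤ K := by positivity
  have case2 : ∀ j k, r ≤ k →
      f j (k+1) ≤ K * (ρ j ^ (-q)) ^ r * (((k:ℝ)+2) ^ (-e)) := by
    intro j k hk
    have h1 := key j (k+1) r (le_trans hk (Nat.le_succ k)) le_rfl
    have hd1 : (1:ℝ) ≤ ((k + 2 - r : ℕ) : ℝ) := by
      have h : 1 ≤ k + 2 - r := by omega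
      exact_mod_cast h
    have hd0 : (0:ℝ) < ((k + 2 - r : ℕ) : ℝ) := lt_of_lt_of_le one_pos hd1
    have hP : (((k + 2 - r : ℕ) : ℝ)) ^ r / (r.factorial : ℝ) ≤ ((k+1).choose r : ℝ) := by
      have h := Nat.pow_le_choose (α := ℝ) r (k+1)
      have he' : k + 1 + 1 - r = k + 2 - r := by omega
      rw [he'] at h
      exact h
    have hposP : (0:ℝ) < (((k + 2 - r : ℕ) : ℝ)) ^ r / (r.factorial : ℝ) := by positivity
    have h2 : (((k+1).choose r : ℝ)) ^ (-s)
        ≤ ((((k + 2 - r : ℕ) : ℝ)) ^ r / (r.factorial : ℝ)) ^ (-s) :=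
      Real.rpow_le_rpow_of_nonpos hposP hP (neg_nonpos.2 hs0.le)
    have h3 : ((((k + 2 - r : ℕ) : ℝ)) ^ r / (r.factorial : ℝ)) ^ (-s)
        = (r.factorial : ℝ) ^ s * ((k + 2 - r : ℕ) : ℝ) ^ (-e) := by
      rw [Real.div_rpow (by positivity) (by positivity),
        Real.rpow_neg (by positivity : (0:ℝ) ≤ (r.factorial : ℝ)), div_eq_mul_inv, inv_inv,
        ← Real.rpow_natCast (((k + 2 - r : ℕ) : ℝ)) r, ← Real.rpow_mul hd0.le,
        show ((r:ℕ) : ℝ) * (-s) = -e from by rw [he_def]; ring]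
      ring
    have hquot : ((k:ℝ)+2) / ((r:ℝ)+1) ≤ ((k + 2 - r : ℕ) : ℝ) := by
      rw [div_le_iff₀ (by positivity)]
      have hnat : k + 2 ≤ (k + 2 - r) * (r + 1) := by
        have hd2 : 1 ≤ k + 2 - r := by omega
        have h4 : r ≤ (k + 2 - r) * r := by
          calc r = 1 * r := (one_mul r).symm
            _ ≤ (k + 2 - r) * r := Nat.mul_le_mul_right r hd2
        have h5 : (k + 2 - r) * (r + 1) = (k + 2 - r) * r + (k + 2 - r) := by ring
        omega
      have := (Nat.cast_le (α := ℝ)).2 hnat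
      push_cast at this
      linarith
    have h4 : ((k + 2 - r : ℕ) : ℝ) ^ (-e) ≤ (((k:ℝ)+2) / ((r:ℝ)+1)) ^ (-e) :=
      Real.rpow_le_rpow_of_nonpos (by positivity) hquot (neg_nonpos.2 he0.le)
    have h5 : (((k:ℝ)+2) / ((r:ℝ)+1)) ^ (-e) = ((r:ℝ)+1) ^ e * ((k:ℝ)+2) ^ (-e) := by
      rw [Real.div_rpow (by positivity) (by positivity),
        Real.rpow_neg (by positivity : (0:ℝ) ≤ (r:ℝ)+1), div_eq_mul_inv, inv_inv]
      ring
    have hx0r : (0:ℝ) ≤ (ρ j ^ (-q)) ^ r := pow_nonneg (hxj j).le r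
    calc f j (k+1) ≤ (((k+1).choose r : ℝ)) ^ (-s) * (ρ j ^ (-q)) ^ r := h1
      _ ≤ ((((k + 2 - r : ℕ) : ℝ)) ^ r / (r.factorial : ℝ)) ^ (-s) * (ρ j ^ (-q)) ^ r :=
          mul_le_mul_of_nonneg_right h2 hx0r
      _ = (r.factorial : ℝ) ^ s * ((k + 2 - r : ℕ) : ℝ) ^ (-e) * (ρ j ^ (-q)) ^ r := by
          rw [h3]
      _ ≤ (r.factorial : ℝ) ^ s * (((r:ℝ)+1) ^ e * ((k:ℝ)+2) ^ (-e)) * (ρ j ^ (-q)) ^ r := by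
          refine mul_le_mul_of_nonneg_right (mul_le_mul_of_nonneg_left ?_ (by positivity)) hx0r
          exact h5 ▸ h4
      _ = K * (ρ j ^ (-q)) ^ r * (((k:ℝ)+2) ^ (-e)) := by rw [hK_def]; ring
  have hT : Summable (fun k : ℕ => ((k:ℝ)+2) ^ (-e)) := by
    have h := Real.summable_nat_rpow (p := -e) |>.2 (by linarith)
    have h2 := (summable_nat_add_iff 2).2 h
    refine h2.congr fun k => ?_
    congr 1
    push_cast; ring
  have hg1 : ∀ j, Summable (fun k : ℕ => if k + 1 ≤ r then (ρ j ^ (-q)) ^ (k+1) else 0) :=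
    fun j => summable_of_ne_finset_zero (s := Finset.range r)
      (fun k hk => if_neg (by simp only [Finset.mem_range, not_lt] at hk; omega))
  have hg2 : ∀ j, Summable (fun k : ℕ => K * (ρ j ^ (-q)) ^ r * ((k:ℝ)+2) ^ (-e)) :=
    fun j => hT.mul_left _
  have hfg : ∀ j k, f j (k+1) ≤ (if k + 1 ≤ r then (ρ j ^ (-q)) ^ (k+1) else 0)
      + K * (ρ j ^ (-q)) ^ r * ((k:ℝ)+2) ^ (-e) := by
    intro j k
    have hx0r : (0:ℝ) ≤ (ρ j ^ (-q)) ^ r := pow_nonneg (hxj j).le r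
    have hrest : (0:ℝ) ≤ K * (ρ j ^ (-q)) ^ r * ((k:ℝ)+2) ^ (-e) :=
      mul_nonneg (mul_nonneg hK0 hx0r) (Real.rpow_nonneg (by positivity) _)
    by_cases hkr : k + 1 ≤ r
    · rw [if_pos hkr]
      have := case1 j (k+1) hkr
      linarith
    · rw [if_neg hkr]
      have := case2 j k (by omega)
      linarith
  have hb : ∀ j, Summable fun k => f j (k+1) :=
    fun j => Summable.of_nonneg_of_le (fun k => hfpos j (k+1)) (hfg j) ((hg1 j).add (hg2 j))
  set T : ℝ := ∑' k : ℕ, ((k:ℝ)+2) ^ (-e) with hT_def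
  have hcle : ∀ j, (∑' k, f j (k+1))
      ≤ (r:ℝ) * (ρ j ^ (-q) + (ρ j ^ (-q)) ^ r) + (K * T) * (ρ j ^ (-q)) ^ r := by
    intro j
    have hx0 : (0:ℝ) ≤ ρ j ^ (-q) := (hxj j).le
    have hx0r : (0:ℝ) ≤ (ρ j ^ (-q)) ^ r := pow_nonneg hx0 r
    have h6 : (∑' k, f j (k+1)) ≤ ∑' k, ((if k + 1 ≤ r then (ρ j ^ (-q)) ^ (k+1) else 0)
        + K * (ρ j ^ (-q)) ^ r * ((k:ℝ)+2) ^ (-e)) :=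
      Summable.tsum_le_tsum (hfg j) (hb j) ((hg1 j).add (hg2 j))
    rw [Summable.tsum_add (hg1 j) (hg2 j)] at h6
    have h7 : ∑' k : ℕ, (if k + 1 ≤ r then (ρ j ^ (-q)) ^ (k+1) else 0)
        = ∑ k ∈ Finset.range r, (if k + 1 ≤ r then (ρ j ^ (-q)) ^ (k+1) else 0) :=
      tsum_eq_sum (fun k hk => if_neg (by simp only [Finset.mem_range, not_lt] at hk; omega))
    have h8 : ∑ k ∈ Finset.range r, (if k + 1 ≤ r then (ρ j ^ (-q)) ^ (k+1) else 0)
        ≤ (r:ℝ) * (ρ j ^ (-q) + (ρ j ^ (-q)) ^ r) := by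
      have hone : ∀ k ∈ Finset.range r, (if k + 1 ≤ r then (ρ j ^ (-q)) ^ (k+1) else 0)
          ≤ ρ j ^ (-q) + (ρ j ^ (-q)) ^ r := by
        intro k hk
        rw [Finset.mem_range] at hk
        rw [if_pos (by omega)]
        rcases le_total (ρ j ^ (-q)) 1 with h | h
        · have hle := pow_le_of_le_one hx0 h (by omega : k + 1 ≠ 0)
          linarith
        · have hle := pow_le_pow_right₀ h (show k + 1 ≤ r by omega)
          linarith
      calc _ ≤ ∑ _k ∈ Finset.range r, (ρ j ^ (-q) + (ρ j ^ (-q)) ^ r) :=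
            Finset.sum_le_sum hone
        _ = (r:ℝ) * (ρ j ^ (-q) + (ρ j ^ (-q)) ^ r) := by
            rw [Finset.sum_const, Finset.card_range, nsmul_eq_mul]
    have h9 : ∑' k : ℕ, K * (ρ j ^ (-q)) ^ r * ((k:ℝ)+2) ^ (-e)
        = (K * T) * (ρ j ^ (-q)) ^ r := by
      rw [tsum_mul_left, hT_def]; ring
    rw [h7, h9] at h6
    linarith
  have hxr : Summable fun j => (ρ j ^ (-q)) ^ r :=
    summable_pow_of_summable_aux (fun j => (hxj j).le) hρsum (by omega)
  have hD : Summable fun j => (r:ℝ) * (ρ j ^ (-q) + (ρ j ^ (-q)) ^ r)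
      + (K * T) * (ρ j ^ (-q)) ^ r :=
    ((hρsum.add hxr).mul_left _).add (hxr.mul_left _)
  have hc : Summable fun j => ∑' k, f j (k+1) :=
    Summable.of_nonneg_of_le (fun j => tsum_nonneg fun k => hfpos j (k+1)) hcle hD
  have main := summable_finsupp_prod_aux f hf0 hfpos hb hc
  refine main.congr fun ν => ?_
  exact Real.finset_prod_rpow ν.support (fun j => A j (ν j)) (fun i _ => (hApos i (ν i)).le) (-s)
end

section
/- Let ψ : ℝ → ℝ be the Schauder hat function ψ(x) := max(0, 1/2 - |x - 1/2|). Then for all x, x' ∈ [0,1], ∑_{l=0}^∞ ∑_{k=0}^{2^l - 1} 2^{-l} · ψ(2^l x - k) · ψ(2^l x' - k) = min(x, x') - x·x'. In other words, the Lévy–Ciesielski (Schauder) system ψ_{l,k}(x) = 2^{-l/2} ψ(2^l x - k) reproduces the Brownian bridge covariance min(x,x') - xx'. -/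
/-- The Schauder hat function `ψ(x) = max(0, 1/2 - |x - 1/2|)`. -/
noncomputable def schauderHat (x : ℝ) : ℝ := max 0 (1 / 2 - |x - 1 / 2|)

lemma hat_nonneg (t : ℝ) : 0 ≤ schauderHat t := le_max_left _ _

lemma hat_of_nonpos {t : ℝ} (h : t ≤ 0) : schauderHat t = 0 := by
  have h1 : |t - 1/2| = 1/2 - t := by
    rw [abs_of_nonpos (by linarith : t - 1/2 ≤ 0)]; ring
  rw [schauderHat, h1]
  exact max_eq_left (by linarith)

lemma hat_of_one_le {t : ℝ} (h : 1 ≤ t) : schauderHat t = 0 := by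
  have h1 : |t - 1/2| = t - 1/2 := abs_of_nonneg (by linarith)
  rw [schauderHat, h1]
  exact max_eq_left (by linarith)

lemma hat_of_le_half {t : ℝ} (h0 : 0 ≤ t) (h : t ≤ 1/2) : schauderHat t = t := by
  have h1 : |t - 1/2| = 1/2 - t := by
    rw [abs_of_nonpos (by linarith : t - 1/2 ≤ 0)]; ring
  rw [schauderHat, h1]
  have : (1:ℝ)/2 - (1/2 - t) = t := by ring
  rw [this]
  exact max_eq_right h0

lemma hat_of_half_le {t : ℝ} (h : 1/2 ≤ t) (h1 : t ≤ 1) : schauderHat t = 1 - t := by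
  have h2 : |t - 1/2| = t - 1/2 := abs_of_nonneg (by linarith)
  rw [schauderHat, h2]
  have : (1:ℝ)/2 - (t - 1/2) = 1 - t := by ring
  rw [this]
  exact max_eq_right (by linarith)

lemma hat_key (t : ℝ) : min (1/2) t - (min 0 t + min 1 t)/2 = schauderHat t / 2 := by
  rcases le_total t 0 with h | h
  · rw [min_eq_right h, min_eq_right (by linarith : t ≤ (1:ℝ)/2),
      min_eq_right (by linarith : t ≤ (1:ℝ)), hat_of_nonpos h]
    ring
  · rcases le_total t (1/2) with h2 | h2
    · rw [min_eq_right h2, min_eq_left h, min_eq_right (by linarith : t ≤ (1:ℝ)),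
        hat_of_le_half h h2]
      ring
    · rcases le_total t 1 with h3 | h3
      · rw [min_eq_left h2, min_eq_left h, min_eq_right h3, hat_of_half_le h2 h3]
        ring
      · rw [min_eq_left h2, min_eq_left h, min_eq_left h3, hat_of_one_le h3]
        ring

lemma min_affine (c d p q : ℝ) (hc : 0 ≤ c) :
    min (d + c*p) (d + c*q) = d + c * min p q := by
  rcases le_total p q with h | h
  · rw [min_eq_left h, min_eq_left (by nlinarith)]
  · rw [min_eq_right h, min_eq_right (by nlinarith)]

lemma min_lip (a b c : ℝ) : |min a c - min b c| ≤ |a - b| := by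
  have h1 := le_abs_self (a - b)
  have h2 := neg_abs_le (a - b)
  rw [abs_le]
  constructor <;> simp only [min_def] <;> split_ifs <;> linarith

noncomputable def dyadicApprox (x' : ℝ) (n : ℕ) (x : ℝ) : ℝ :=
  min ((⌊(2:ℝ)^n * x⌋ : ℝ)/2^n) x'
    + ((2:ℝ)^n * x - ⌊(2:ℝ)^n * x⌋)
      * (min (((⌊(2:ℝ)^n * x⌋ : ℝ) + 1)/2^n) x' - min ((⌊(2:ℝ)^n * x⌋ : ℝ)/2^n) x')

lemma dyadicApprox_one (x' : ℝ) (n : ℕ) : dyadicApprox x' n 1 = min 1 x' := by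
  have h2n : (0:ℝ) < 2^n := by positivity
  have hK : ⌊(2:ℝ)^n * 1⌋ = (2^n : ℤ) := by
    rw [mul_one]
    have : ((2:ℝ))^n = (((2:ℤ)^n : ℤ) : ℝ) := by push_cast; ring
    rw [this, Int.floor_intCast]
  rw [dyadicApprox, hK]
  have ha : (((2:ℤ)^n : ℤ) : ℝ) / 2^n = 1 := by
    push_cast
    field_simp
  rw [ha]
  have : (2:ℝ)^n * 1 - (((2:ℤ)^n : ℤ) : ℝ) = 0 := by push_cast; ring
  rw [this]
  ring

lemma dyadicApprox_zero (x x' : ℝ) (hx0 : 0 ≤ x) (hx1 : x ≤ 1) (hx'0 : 0 ≤ x')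
    (hx'1 : x' ≤ 1) : dyadicApprox x' 0 x = x * x' := by
  rcases eq_or_lt_of_le hx1 with rfl | h
  · rw [dyadicApprox_one, min_eq_right hx'1, one_mul]
  · have hK : ⌊(2:ℝ)^0 * x⌋ = 0 := by
      rw [pow_zero, one_mul]
      exact Int.floor_eq_zero_iff.mpr ⟨hx0, h⟩
    rw [dyadicApprox, hK]
    norm_num [min_eq_left hx'0, min_eq_right hx'1]

lemma dyadicApprox_close (x x' : ℝ) (n : ℕ) (hx0 : 0 ≤ x) :
    |dyadicApprox x' n x - min x x'| ≤ ((2:ℝ)^n)⁻¹ := by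
  have h2n : (0:ℝ) < 2^n := by positivity
  set K : ℤ := ⌊(2:ℝ)^n * x⌋ with hKdef
  have hKle : (K:ℝ) ≤ 2^n * x := Int.floor_le _
  have hKlt : 2^n * x < K + 1 := Int.lt_floor_add_one _
  set θ : ℝ := 2^n * x - K with hθdef
  have hθ0 : 0 ≤ θ := by simp [hθdef]; linarith
  have hθ1 : θ < 1 := by simp [hθdef]; linarith
  have expand : dyadicApprox x' n x - min x x'
      = (1-θ)*(min ((K:ℝ)/2^n) x' - min x x') + θ*(min (((K:ℝ)+1)/2^n) x' - min x x') := by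
    rw [dyadicApprox, ← hKdef, ← hθdef]
    ring
  have l1 : |min ((K:ℝ)/2^n) x' - min x x'| ≤ θ / 2^n := by
    refine le_trans (min_lip _ _ _) ?_
    have : (K:ℝ)/2^n - x = -(θ/2^n) := by field_simp; ring
    rw [this, abs_neg, abs_of_nonneg (div_nonneg hθ0 h2n.le)]
  have l2 : |min (((K:ℝ)+1)/2^n) x' - min x x'| ≤ (1-θ) / 2^n := by
    refine le_trans (min_lip _ _ _) ?_
    have : ((K:ℝ)+1)/2^n - x = (1-θ)/2^n := by field_simp; ring
    rw [this, abs_of_nonneg (div_nonneg (by linarith) h2n.le)]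
  rw [expand]
  calc |(1-θ)*(min ((K:ℝ)/2^n) x' - min x x') + θ*(min (((K:ℝ)+1)/2^n) x' - min x x')|
      ≤ |(1-θ)*(min ((K:ℝ)/2^n) x' - min x x')| + |θ*(min (((K:ℝ)+1)/2^n) x' - min x x')| :=
        abs_add_le _ _
    _ = (1-θ)*|min ((K:ℝ)/2^n) x' - min x x'| + θ*|min (((K:ℝ)+1)/2^n) x' - min x x'| := by
        rw [abs_mul, abs_mul, abs_of_nonneg (by linarith : (0:ℝ) ≤ 1-θ), abs_of_nonneg hθ0]
    _ ≤ ((2:ℝ)^n)⁻¹ := by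
        have key1 : (1-θ)*|min ((K:ℝ)/2^n) x' - min x x'| ≤ (1-θ)*(θ/2^n) :=
          mul_le_mul_of_nonneg_left l1 (by linarith)
        have key2 : θ*|min (((K:ℝ)+1)/2^n) x' - min x x'| ≤ θ*((1-θ)/2^n) :=
          mul_le_mul_of_nonneg_left l2 hθ0
        have hsq : (0:ℝ) ≤ (2*θ-1)^2 * (2^n)⁻¹ :=
          mul_nonneg (sq_nonneg _) (inv_nonneg.mpr h2n.le)
        have hinv : θ/2^n = θ * (2^n)⁻¹ := div_eq_mul_inv _ _
        have hinv2 : (1-θ)/2^n = (1-θ) * (2^n)⁻¹ := div_eq_mul_inv _ _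
        nlinarith [key1, key2, hsq, inv_pos.mpr h2n, hinv, hinv2]

lemma step (n : ℕ) (x x' : ℝ) (hx0 : 0 ≤ x) (hx1 : x ≤ 1) :
    ∑ k ∈ Finset.range (2 ^ n),
        ((2 : ℝ) ^ n)⁻¹ * schauderHat (2 ^ n * x - k) * schauderHat (2 ^ n * x' - k)
      = dyadicApprox x' (n+1) x - dyadicApprox x' n x := by
  have h2n : (0:ℝ) < 2^n := by positivity
  rcases eq_or_lt_of_le hx1 with rfl | hlt
  · rw [dyadicApprox_one, dyadicApprox_one, sub_self]
    refine Finset.sum_eq_zero fun k hk => ?_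
    rw [Finset.mem_range] at hk
    have : (1:ℝ) ≤ 2^n * 1 - k := by
      have : (k:ℝ) + 1 ≤ 2^n := by exact_mod_cast Nat.succ_le_of_lt hk
      linarith
    rw [hat_of_one_le this]
    ring
  · set K : ℤ := ⌊(2:ℝ)^n * x⌋ with hKdef
    have hKle : (K:ℝ) ≤ 2^n * x := Int.floor_le _
    have hKlt : 2^n * x < K + 1 := Int.lt_floor_add_one _
    have hK0 : 0 ≤ K := by
      rw [hKdef]
      exact Int.floor_nonneg.mpr (by positivity)
    have hKlt2 : (K:ℝ) < 2^n := lt_of_le_of_lt hKle (by nlinarith)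
    obtain ⟨k0, hk0⟩ : ∃ k0 : ℕ, (k0 : ℤ) = K := ⟨K.toNat, Int.toNat_of_nonneg hK0⟩
    have hk0R : (k0 : ℝ) = (K : ℝ) := by exact_mod_cast hk0
    have hk0mem : k0 ∈ Finset.range (2^n) := by
      rw [Finset.mem_range]
      have h1 : ((k0:ℝ)) < ((2^n : ℕ) : ℝ) := by
        rw [hk0R]; push_cast; exact hKlt2
      exact_mod_cast h1
    rw [Finset.sum_eq_single_of_mem k0 hk0mem ?side]
    case side =>
      intro b hb hne
      rcases lt_or_gt_of_ne hne with hblt | hbgt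
      · -- b < k0 : argument ≥ 1
        have hb1 : (b:ℝ) + 1 ≤ (K:ℝ) := by
          rw [← hk0R]; exact_mod_cast Nat.succ_le_of_lt hblt
        rw [hat_of_one_le (by linarith : (1:ℝ) ≤ 2^n * x - b)]
        ring
      · have hb1 : (K:ℝ) + 1 ≤ (b:ℝ) := by
          rw [← hk0R]; exact_mod_cast Nat.succ_le_of_lt hbgt
        rw [hat_of_nonpos (by linarith : 2^n * x - (b:ℝ) ≤ 0), mul_zero, zero_mul]
    -- main term
    rw [hk0R]
    set θ : ℝ := 2^n * x - K with hθdef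
    set φ : ℝ := 2^n * x' - K with hφdef
    have hθ0 : 0 ≤ θ := by simp [hθdef]; linarith
    have hθ1 : θ < 1 := by simp [hθdef]; linarith
    have hφkey : schauderHat φ = 2 * (min (1/2) φ - (min 0 φ + min 1 φ)/2) := by
      have := hat_key φ
      linarith
    have hMn : dyadicApprox x' n x
        = min ((K:ℝ)/2^n) x' + θ * (min (((K:ℝ)+1)/2^n) x' - min ((K:ℝ)/2^n) x') := by
      rw [dyadicApprox, ← hKdef, ← hθdef]
    have e0 : x' = (K:ℝ)/2^n + ((2:ℝ)^n)⁻¹ * φ := by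
      rw [hφdef]; field_simp; ring
    have henn : (0:ℝ) ≤ ((2:ℝ)^n)⁻¹ := inv_nonneg.mpr h2n.le
    have hm0 : min ((K:ℝ)/2^n) x' = (K:ℝ)/2^n + ((2:ℝ)^n)⁻¹ * min 0 φ := by
      have h := min_affine (((2:ℝ)^n)⁻¹) ((K:ℝ)/2^n) 0 φ henn
      rw [mul_zero, add_zero, ← e0] at h
      exact h
    have hm1 : min (((K:ℝ)+1)/2^n) x' = (K:ℝ)/2^n + ((2:ℝ)^n)⁻¹ * min 1 φ := by
      have h := min_affine (((2:ℝ)^n)⁻¹) ((K:ℝ)/2^n) 1 φ henn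
      rw [← e0] at h
      rw [show (K:ℝ)/2^n + ((2:ℝ)^n)⁻¹ * 1 = ((K:ℝ)+1)/2^n by field_simp] at h
      exact h
    have hmh : min ((2*(K:ℝ)+1)/2^(n+1)) x' = (K:ℝ)/2^n + ((2:ℝ)^n)⁻¹ * min (1/2) φ := by
      have h := min_affine (((2:ℝ)^n)⁻¹) ((K:ℝ)/2^n) (1/2) φ henn
      rw [← e0] at h
      rw [show (K:ℝ)/2^n + ((2:ℝ)^n)⁻¹ * (1/2) = (2*(K:ℝ)+1)/2^(n+1) by
        rw [pow_succ]; field_simp] at h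
      exact h
    rcases lt_or_ge θ (1/2) with hhalf | hhalf
    · have hfloor : ⌊(2:ℝ)^(n+1) * x⌋ = 2*K := by
        rw [Int.floor_eq_iff]
        constructor
        · push_cast
          rw [pow_succ]
          nlinarith [hθdef]
        · push_cast
          rw [pow_succ]
          have : 2^n * x = (K:ℝ) + θ := by rw [hθdef]; ring
          nlinarith
      have hMn1 : dyadicApprox x' (n+1) x
          = min ((2*(K:ℝ))/2^(n+1)) x'
            + (2*θ) * (min ((2*(K:ℝ)+1)/2^(n+1)) x' - min ((2*(K:ℝ))/2^(n+1)) x') := by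
        rw [dyadicApprox, hfloor]
        push_cast
        have h1 : (2:ℝ)^(n+1) * x - 2*(K:ℝ) = 2*θ := by
          rw [hθdef, pow_succ]; ring
        rw [h1]
      have ha : (2*(K:ℝ))/2^(n+1) = (K:ℝ)/2^n := by
        rw [pow_succ]; field_simp
      rw [hMn1, hMn, ha, hm0, hm1, hmh, hφkey,
        hat_of_le_half hθ0 (le_of_lt hhalf)]
      ring
    · have hfloor : ⌊(2:ℝ)^(n+1) * x⌋ = 2*K+1 := by
        rw [Int.floor_eq_iff]
        have hx2 : 2^n * x = (K:ℝ) + θ := by rw [hθdef]; ring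
        constructor
        · push_cast
          rw [pow_succ]
          nlinarith
        · push_cast
          rw [pow_succ]
          nlinarith
      have hMn1 : dyadicApprox x' (n+1) x
          = min ((2*(K:ℝ)+1)/2^(n+1)) x'
            + (2*θ-1) * (min ((2*(K:ℝ)+1+1)/2^(n+1)) x' - min ((2*(K:ℝ)+1)/2^(n+1)) x') := by
        rw [dyadicApprox, hfloor]
        push_cast
        have h1 : (2:ℝ)^(n+1) * x - (2*(K:ℝ)+1) = 2*θ-1 := by
          rw [hθdef, pow_succ]; ring
        rw [h1]
      have hb : (2*(K:ℝ)+1+1)/2^(n+1) = ((K:ℝ)+1)/2^n := by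
        rw [pow_succ]; field_simp; ring
      rw [hMn1, hMn, hb, hm0, hm1, hmh, hφkey,
        hat_of_half_le hhalf (le_of_lt hθ1)]
      ring

/-- The Lévy–Ciesielski (Schauder) system reproduces the Brownian-bridge
covariance: for all `x, x' ∈ [0,1]`,
`∑_{l=0}^∞ ∑_{k=0}^{2^l - 1} 2^{-l} ψ(2^l x - k) ψ(2^l x' - k) = min(x,x') - x·x'`. -/
theorem stmt_18 (x x' : ℝ) (hx : x ∈ Set.Icc (0 : ℝ) 1) (hx' : x' ∈ Set.Icc (0 : ℝ) 1) :
    ∑' l : ℕ, ∑ k ∈ Finset.range (2 ^ l),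
        ((2 : ℝ) ^ l)⁻¹ * schauderHat (2 ^ l * x - k) * schauderHat (2 ^ l * x' - k) =
      min x x' - x * x' := by
  obtain ⟨hx0, hx1⟩ := hx
  obtain ⟨hx'0, hx'1⟩ := hx'
  set f : ℕ → ℝ := fun l => ∑ k ∈ Finset.range (2 ^ l),
      ((2 : ℝ) ^ l)⁻¹ * schauderHat (2 ^ l * x - k) * schauderHat (2 ^ l * x' - k) with hf
  have htel : ∀ L, ∑ l ∈ Finset.range L, f l
      = dyadicApprox x' L x - dyadicApprox x' 0 x := by
    intro L
    calc ∑ l ∈ Finset.range L, f l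
        = ∑ l ∈ Finset.range L, (dyadicApprox x' (l+1) x - dyadicApprox x' l x) :=
          Finset.sum_congr rfl fun l _ => step l x x' hx0 hx1
      _ = dyadicApprox x' L x - dyadicApprox x' 0 x :=
          Finset.sum_range_sub (fun l => dyadicApprox x' l x) L
  have h0 : dyadicApprox x' 0 x = x * x' := dyadicApprox_zero x x' hx0 hx1 hx'0 hx'1
  have hnonneg : ∀ l, 0 ≤ f l := fun l =>
    Finset.sum_nonneg fun k _ =>
      mul_nonneg (mul_nonneg (by positivity) (hat_nonneg _)) (hat_nonneg _)
  have hbound : ∀ L, ∑ l ∈ Finset.range L, f l ≤ min x x' + 1 - x * x' := by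
    intro L
    rw [htel, h0]
    have h1 := dyadicApprox_close x x' L hx0
    have h2 : ((2:ℝ)^L)⁻¹ ≤ 1 := by
      rw [inv_le_one_iff₀]
      right
      exact one_le_pow₀ one_le_two
    have := abs_le.mp h1
    linarith [this.2]
  have hsummable : Summable f := summable_of_sum_range_le hnonneg hbound
  have htendsto : Filter.Tendsto (fun L => ∑ l ∈ Finset.range L, f l)
      Filter.atTop (nhds (min x x' - x * x')) := by
    have heq : (fun L => ∑ l ∈ Finset.range L, f l)
        = fun L => dyadicApprox x' L x - x * x' := by
      funext L; rw [htel, h0]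
    rw [heq]
    have h1 : Filter.Tendsto (fun L => dyadicApprox x' L x - min x x')
        Filter.atTop (nhds 0) := by
      have hb : ∀ L : ℕ, ‖dyadicApprox x' L x - min x x'‖ ≤ ((2:ℝ)^L)⁻¹ := fun L => by
        rw [Real.norm_eq_abs]
        exact dyadicApprox_close x x' L hx0
      have hg : Filter.Tendsto (fun L : ℕ => ((2:ℝ)^L)⁻¹) Filter.atTop (nhds 0) := by
        have : Filter.Tendsto (fun L : ℕ => ((2:ℝ)⁻¹)^L) Filter.atTop (nhds 0) :=
          tendsto_pow_atTop_nhds_zero_of_lt_one (by norm_num) (by norm_num)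
        simpa [inv_pow] using this
      exact squeeze_zero_norm hb hg
    have h2 := h1.add_const (min x x' - x * x')
    simp only [zero_add] at h2
    convert h2 using 2 with L
    ring
  exact ((hsummable.hasSum_iff_tendsto_nat).mpr htendsto).tsum_eq
end
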